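/- arXiv:1802.04423 — 6 statements merged into one kernel-verified Lean document; each statement's English description precedes it below -/
import Mathlib

section
/- Let w ∈ PSL₂(ℝ) be represented by a real matrix (a b; c d), and let v = (1, is; 0, 1) with s real and nonzero. If the product wv belongs to V·H (where V = {(1, it; 0, 1) : t ∈ ℝ} and H = PSL₂(ℝ)), then c = 0, i.e., w is upper triangular. -/
theorem Matrix.unitriangular_mul_apply_one {R : Type*} [Semiring R] (x : R)
    (M : Matrix (Fin 2) (Fin 2) R) (j : Fin 2) : (!![1, x; 0, 1] * M) 1 j = M 1 j := by
  simp [Matrix.mul_apply, Fin.sum_univ_two]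

theorem stmt_0_general (a b c d s : ℝ) (hs : s ≠ 0)
    (h : ∃ (t : ℝ) (h' : Matrix (Fin 2) (Fin 2) ℝ) (ε : ℤˣ),
      h'.det = 1 ∧
      (!![(a : ℂ), (b : ℂ); (c : ℂ), (d : ℂ)]) * (!![1, (s : ℂ) * Complex.I; 0, 1]) =
        (((ε : ℤ) : ℂ)) • (!![(1 : ℂ), (t : ℂ) * Complex.I; 0, 1] * h'.map Complex.ofReal)) :
    c = 0 := by
  obtain ⟨t, h', ε, -, heq⟩ := h
  -- An element of `V` does not change the bottom row, so the lower-right entry of the right-hand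
  -- side is real, whereas on the left it is `d + c s i`.
  have hentry := congrFun (congrFun heq 1) 1
  rw [Matrix.smul_apply, Matrix.unitriangular_mul_apply_one, Matrix.map_apply] at hentry
  have hcs : c * s = 0 := by simpa [Matrix.mul_fin_two] using congrArg Complex.im hentry
  exact (mul_eq_zero.1 hcs).resolve_right hs

/-- If `w ∈ PSL₂(ℝ)` is represented by a real matrix `(a b; c d)` (so `ad - bc = 1`),
`v = (1, is; 0, 1)` with `s` real and nonzero, and the product `w * v` lies in `V·H`
(where `V = {(1, it; 0, 1) : t ∈ ℝ}` and `H = PSL₂(ℝ)`, elements taken up to sign),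
then `c = 0`, i.e. `w` is upper triangular. -/
theorem stmt_0 (a b c d s : ℝ) (hs : s ≠ 0) (hdet : a * d - b * c = 1)
    (h : ∃ (t : ℝ) (h' : Matrix (Fin 2) (Fin 2) ℝ) (ε : ℤˣ),
      h'.det = 1 ∧
      (!![(a : ℂ), (b : ℂ); (c : ℂ), (d : ℂ)]) * (!![1, (s : ℂ) * Complex.I; 0, 1]) =
        (((ε : ℤ) : ℂ)) • (!![(1 : ℂ), (t : ℂ) * Complex.I; 0, 1] * h'.map Complex.ofReal)) :
    c = 0 :=
  stmt_0_general a b c d s hs h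
end

section
/- For every α > 0 there exists R > 0 such that: for any horoball 𝔥 in ℍ³ and any g ∈ G, if I = {t ∈ ℝ : π(g u_t) ∈ 𝔥} and J = {t ∈ ℝ : π(g u_t) ∈ 𝔥_R}, then J ± α·(length of J) ⊆ I, where 𝔥_R denotes the horoball contained in 𝔥 whose boundary is at hyperbolic distance R from the boundary of 𝔥. -/
open MeasureTheory

/-- Embedding of `ℂ` into the quaternions `ℍ` (span of `1, i`). -/
def cq (z : ℂ) : Quaternion ℝ := ⟨z.re, z.im, 0, 0⟩

/-- The Möbius action of `G = PSL₂(ℂ)` on the upper half-space model of `ℍ³`,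
realized inside the quaternions: `g · p = (a p + b)(c p + d)⁻¹`. -/
noncomputable def mob (g : Matrix (Fin 2) (Fin 2) ℂ) (p : Quaternion ℝ) : Quaternion ℝ :=
  (cq (g 0 0) * p + cq (g 0 1)) * (cq (g 1 0) * p + cq (g 1 1))⁻¹

/-- The base point `j ∈ ℍ³`, so that `π(g) = g · j` is the orbit map `G → ℍ³`. -/
def basept : Quaternion ℝ := ⟨0, 0, 1, 0⟩

/-- The one-parameter unipotent subgroup `u_t = (1, t; 0, 1)`. -/
noncomputable def uR (t : ℝ) : Matrix (Fin 2) (Fin 2) ℂ := !![1, (t : ℂ); 0, 1]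

/-- The horoball at depth `R` inside a horoball of ℍ³ (points of `ℍ`
with `imK = 0`, `imJ > 0`): either a Euclidean ball tangent to the boundary at a
finite point `c ∈ ℝ² = ℂ` with Euclidean diameter `2h` (depth `R` shrinks the
diameter by `e^{-R}`), or, when based at `∞`, the region above height `h`
(depth `R` raises the height to `h e^R`).  Depth `0` recovers the horoball itself. -/
noncomputable def horoball (base : Option (ℝ × ℝ)) (h R : ℝ) : Set (Quaternion ℝ) :=
  match base with
  | some c => {p | p.imK = 0 ∧
      (p.re - c.1) ^ 2 + (p.imI - c.2) ^ 2 + (p.imJ - h * Real.exp (-R)) ^ 2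
        < (h * Real.exp (-R)) ^ 2}
  | none => {p | p.imK = 0 ∧ h * Real.exp R < p.imJ}

lemma det_re (A B C D : ℂ) (hdet : A*D - B*C = 1) :
    A.re*D.re - A.im*D.im - B.re*C.re + B.im*C.im = 1 := by
  have := congrArg Complex.re hdet
  simp [Complex.mul_re] at this
  linarith

lemma det_im (A B C D : ℂ) (hdet : A*D - B*C = 1) :
    A.re*D.im + A.im*D.re - B.re*C.im - B.im*C.re = 0 := by
  have := congrArg Complex.im hdet
  simp [Complex.mul_im] at this
  linarith

lemma S_pos (A B C D : ℂ) (hdet : A*D - B*C = 1) :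
    0 < C.re^2 + C.im^2 + D.re^2 + D.im^2 := by
  rcases lt_or_eq_of_le (by positivity : (0:ℝ) ≤ C.re^2 + C.im^2 + D.re^2 + D.im^2) with h | h
  · exact h
  · exfalso
    have hC : C.re = 0 ∧ C.im = 0 ∧ D.re = 0 ∧ D.im = 0 := by
      refine ⟨?_, ?_, ?_, ?_⟩ <;>
        nlinarith [sq_nonneg C.re, sq_nonneg C.im, sq_nonneg D.re, sq_nonneg D.im]
    have h1 := det_re A B C D hdet
    rw [hC.1, hC.2.1, hC.2.2.1, hC.2.2.2] at h1
    norm_num at h1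

set_option maxHeartbeats 1000000 in
lemma mob_comp (A B C D : ℂ) (hdet : A*D - B*C = 1) :
    mob !![A,B;C,D] basept =
      ⟨(B.re*D.re + B.im*D.im + A.re*C.re + A.im*C.im)/(C.re^2 + C.im^2 + D.re^2 + D.im^2),
       (B.im*D.re - B.re*D.im + A.im*C.re - A.re*C.im)/(C.re^2 + C.im^2 + D.re^2 + D.im^2),
       1/(C.re^2 + C.im^2 + D.re^2 + D.im^2), 0⟩ := by
  have hS := S_pos A B C D hdet
  have hSne : C.re^2 + C.im^2 + D.re^2 + D.im^2 ≠ 0 := hS.ne'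
  have h1 := det_re A B C D hdet
  have h2 := det_im A B C D hdet
  have e00 : (!![A,B;C,D] : Matrix (Fin 2) (Fin 2) ℂ) 0 0 = A := rfl
  have e01 : (!![A,B;C,D] : Matrix (Fin 2) (Fin 2) ℂ) 0 1 = B := rfl
  have e10 : (!![A,B;C,D] : Matrix (Fin 2) (Fin 2) ℂ) 1 0 = C := rfl
  have e11 : (!![A,B;C,D] : Matrix (Fin 2) (Fin 2) ℂ) 1 1 = D := rfl
  unfold mob cq
  rw [e00, e01, e10, e11]
  unfold basept
  have hq : (⟨C.re, C.im, 0, 0⟩ : Quaternion ℝ) * ⟨0,0,1,0⟩ + ⟨D.re, D.im, 0, 0⟩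
      = (⟨D.re, D.im, C.re, C.im⟩ : Quaternion ℝ) := by
    ext <;> simp
  have hnormSq : Quaternion.normSq ((⟨C.re, C.im, 0, 0⟩ : Quaternion ℝ) * ⟨0,0,1,0⟩ + ⟨D.re, D.im, 0, 0⟩)
      = C.re^2 + C.im^2 + D.re^2 + D.im^2 := by
    refine (congrArg Quaternion.normSq hq).trans ?_
    refine (Quaternion.normSq_def' _).trans ?_
    simp
    ring
  have hDq : ((⟨C.re, C.im, 0, 0⟩ : Quaternion ℝ) * ⟨0,0,1,0⟩ + ⟨D.re, D.im, 0, 0⟩) ≠ 0 := by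
    exact Quaternion.normSq_ne_zero.1 (hnormSq ▸ hSne)
  have key : (⟨(B.re*D.re + B.im*D.im + A.re*C.re + A.im*C.im)/(C.re^2 + C.im^2 + D.re^2 + D.im^2),
       (B.im*D.re - B.re*D.im + A.im*C.re - A.re*C.im)/(C.re^2 + C.im^2 + D.re^2 + D.im^2),
       1/(C.re^2 + C.im^2 + D.re^2 + D.im^2), 0⟩ : Quaternion ℝ) *
      ((⟨C.re, C.im, 0, 0⟩ : Quaternion ℝ) * ⟨0,0,1,0⟩ + ⟨D.re, D.im, 0, 0⟩)
      = (⟨A.re, A.im, 0, 0⟩ : Quaternion ℝ) * ⟨0,0,1,0⟩ + ⟨B.re, B.im, 0, 0⟩ := by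
    ext
    case re =>
      simp
      field_simp
      linear_combination C.re * h1 + C.im * h2
    case imI =>
      simp
      field_simp
      linear_combination (- C.im) * h1 + C.re * h2
    case imJ =>
      simp
      field_simp
      linear_combination (- D.re) * h1 - D.im * h2
    case imK =>
      simp
      field_simp
      linear_combination D.im * h1 - D.re * h2
  exact ((eq_mul_inv_iff_mul_eq₀ hDq).2 key).symm

lemma lagr (A B C D : ℂ) (w1 w2 : ℝ) (hdet : A*D - B*C = 1) :
    ((B.re*D.re + B.im*D.im + A.re*C.re + A.im*C.im)
        - w1*(C.re^2 + C.im^2 + D.re^2 + D.im^2))^2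
      + ((B.im*D.re - B.re*D.im + A.im*C.re - A.re*C.im)
        - w2*(C.re^2 + C.im^2 + D.re^2 + D.im^2))^2 + 1
    = (C.re^2 + C.im^2 + D.re^2 + D.im^2) *
        ((A.re - (w1*C.re - w2*C.im))^2 + (A.im - (w1*C.im + w2*C.re))^2
          + (B.re - (w1*D.re - w2*D.im))^2 + (B.im - (w1*D.im + w2*D.re))^2) := by
  have h1 := det_re A B C D hdet
  have h2 := det_im A B C D hdet
  linear_combination (-(A.re*D.re - A.im*D.im - B.re*C.re + B.im*C.im) - 1) * h1
    + (-(A.re*D.im + A.im*D.re - B.re*C.im - B.im*C.re)) * h2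

lemma ball_iff (X Y S w1 w2 e q : ℝ) (hS : 0 < S) (he : 0 < e)
    (hlagr : (X - w1*S)^2 + (Y - w2*S)^2 + 1 = S * q) :
    ((X/S - w1)^2 + (Y/S - w2)^2 + (1/S - e)^2 < e^2) ↔ q < 2*e := by
  have hSne : S ≠ 0 := hS.ne'
  have e1 : ((X/S - w1)^2 + (Y/S - w2)^2 + (1/S - e)^2 - e^2) * S = q - 2*e := by
    field_simp
    first
      | linear_combination S * hlagr
      | linear_combination hlagr
      | linear_combination (S-1) * hlagr
      | linear_combination (1-S) * hlagr
      | linear_combination (-S) * hlagr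
  constructor
  · intro H
    have hneg : (X/S - w1)^2 + (Y/S - w2)^2 + (1/S - e)^2 - e^2 < 0 := by linarith
    nlinarith [mul_neg_of_neg_of_pos hneg hS]
  · intro H
    by_contra Hc
    push_neg at Hc
    have hpos : 0 ≤ (X/S - w1)^2 + (Y/S - w2)^2 + (1/S - e)^2 - e^2 := by linarith
    nlinarith [mul_nonneg hpos hS.le]

lemma qmk_re (x y z w : ℝ) : (⟨x,y,z,w⟩ : Quaternion ℝ).re = x := rfl
lemma qmk_imI (x y z w : ℝ) : (⟨x,y,z,w⟩ : Quaternion ℝ).imI = y := rfl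
lemma qmk_imJ (x y z w : ℝ) : (⟨x,y,z,w⟩ : Quaternion ℝ).imJ = z := rfl
lemma qmk_imK (x y z w : ℝ) : (⟨x,y,z,w⟩ : Quaternion ℝ).imK = w := rfl

lemma horoball_none (h R : ℝ) :
    horoball none h R = {p | p.imK = 0 ∧ h * Real.exp R < p.imJ} := rfl

lemma horoball_some (w : ℝ × ℝ) (h R : ℝ) :
    horoball (some w) h R = {p | p.imK = 0 ∧
      (p.re - w.1) ^ 2 + (p.imI - w.2) ^ 2 + (p.imJ - h * Real.exp (-R)) ^ 2
        < (h * Real.exp (-R)) ^ 2} := rfl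

lemma mul_uR (g : Matrix (Fin 2) (Fin 2) ℂ) (s : ℝ) :
    g * uR s = !![g 0 0, g 0 0 * (s:ℂ) + g 0 1; g 1 0, g 1 0 * (s:ℂ) + g 1 1] := by
  ext i j
  fin_cases i <;> fin_cases j <;>
    simp [uR, Matrix.mul_apply, Fin.sum_univ_two] <;> ring

lemma det_uR (g : Matrix (Fin 2) (Fin 2) ℂ) (hg : g.det = 1) (s : ℝ) :
    g 0 0 * (g 1 0 * (s:ℂ) + g 1 1) - (g 0 0 * (s:ℂ) + g 0 1) * g 1 0 = 1 := by
  rw [Matrix.det_fin_two] at hg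
  linear_combination hg

lemma mem_iff_none (h R : ℝ) (hh : 0 < h) (g : Matrix (Fin 2) (Fin 2) ℂ)
    (hg : g.det = 1) (s : ℝ) :
    mob (g * uR s) basept ∈ horoball none h R ↔
    (((g 1 0).re*s + (g 1 1).re)^2 + ((g 1 0).im*s + (g 1 1).im)^2
      + (g 1 0).re^2 + (g 1 0).im^2 < h⁻¹ * Real.exp (-R)) := by
  have hdet2 := det_uR g hg s
  rw [mul_uR, mob_comp _ _ _ _ hdet2, horoball_none]
  have hS := S_pos _ _ _ _ hdet2
  change _ ∧ _ ↔ _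
  dsimp only
  simp only [eq_self_iff_true]
  set S := (g 1 0).re ^ 2 + (g 1 0).im ^ 2 + (g 1 0 * (s:ℂ) + g 1 1).re ^ 2
      + (g 1 0 * (s:ℂ) + g 1 1).im ^ 2 with hSdef
  have hSeq : ((g 1 0).re*s + (g 1 1).re)^2 + ((g 1 0).im*s + (g 1 1).im)^2
      + (g 1 0).re^2 + (g 1 0).im^2 = S := by
    rw [hSdef]
    simp [Complex.add_re, Complex.add_im, Complex.mul_re, Complex.mul_im]
    ring
  rw [hSeq]
  have hpos : (0:ℝ) < h * Real.exp R := by positivity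
  have key2 : h * Real.exp R < 1/S ↔ S < h⁻¹ * Real.exp (-R) := by
    rw [Real.exp_neg, ← mul_inv, ← one_div, lt_div_iff₀ hS, lt_div_iff₀ hpos]
    constructor <;> intro <;> nlinarith [mul_comm S (h * Real.exp R)]
  exact ⟨fun H => key2.1 H.2, fun H => ⟨trivial, key2.2 H⟩⟩

lemma mem_iff_some (w : ℝ × ℝ) (h R : ℝ) (hh : 0 < h) (g : Matrix (Fin 2) (Fin 2) ℂ)
    (hg : g.det = 1) (s : ℝ) :
    mob (g * uR s) basept ∈ horoball (some w) h R ↔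
    ((((g 0 0).re - (w.1*(g 1 0).re - w.2*(g 1 0).im))*s
        + ((g 0 1).re - (w.1*(g 1 1).re - w.2*(g 1 1).im)))^2
      + (((g 0 0).im - (w.1*(g 1 0).im + w.2*(g 1 0).re))*s
        + ((g 0 1).im - (w.1*(g 1 1).im + w.2*(g 1 1).re)))^2
      + ((g 0 0).re - (w.1*(g 1 0).re - w.2*(g 1 0).im))^2
      + ((g 0 0).im - (w.1*(g 1 0).im + w.2*(g 1 0).re))^2
      < (2*h) * Real.exp (-R)) := by
  have hdet2 := det_uR g hg s
  rw [mul_uR, mob_comp _ _ _ _ hdet2, horoball_some]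
  have hS := S_pos _ _ _ _ hdet2
  change _ ∧ _ ↔ _
  dsimp only
  simp only [eq_self_iff_true]
  have hpos : (0:ℝ) < h * Real.exp (-R) := by positivity
  have hlagr := lagr (g 0 0) (g 0 0 * (s:ℂ) + g 0 1) (g 1 0) (g 1 0 * (s:ℂ) + g 1 1)
      w.1 w.2 hdet2
  have hcomps : ((g 0 0).re - (w.1*(g 1 0).re - w.2*(g 1 0).im))^2
      + ((g 0 0).im - (w.1*(g 1 0).im + w.2*(g 1 0).re))^2
      + ((g 0 0 * (s:ℂ) + g 0 1).re - (w.1*(g 1 0 * (s:ℂ) + g 1 1).re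
          - w.2*(g 1 0 * (s:ℂ) + g 1 1).im))^2
      + ((g 0 0 * (s:ℂ) + g 0 1).im - (w.1*(g 1 0 * (s:ℂ) + g 1 1).im
          + w.2*(g 1 0 * (s:ℂ) + g 1 1).re))^2
      = (((g 0 0).re - (w.1*(g 1 0).re - w.2*(g 1 0).im))*s
        + ((g 0 1).re - (w.1*(g 1 1).re - w.2*(g 1 1).im)))^2
      + (((g 0 0).im - (w.1*(g 1 0).im + w.2*(g 1 0).re))*s
        + ((g 0 1).im - (w.1*(g 1 1).im + w.2*(g 1 1).re)))^2
      + ((g 0 0).re - (w.1*(g 1 0).re - w.2*(g 1 0).im))^2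
      + ((g 0 0).im - (w.1*(g 1 0).im + w.2*(g 1 0).re))^2 := by
    simp [Complex.add_re, Complex.add_im, Complex.mul_re, Complex.mul_im]
    ring
  rw [hcomps] at hlagr
  have hb := ball_iff _ _ _ w.1 w.2 (h * Real.exp (-R)) _ hS hpos hlagr
  rw [show (2*h) * Real.exp (-R) = 2*(h * Real.exp (-R)) by ring]
  exact ⟨fun H => hb.1 H.2, fun H => ⟨trivial, hb.2 H⟩⟩

set_option maxHeartbeats 1000000 in
lemma key_quad (α : ℝ) (hα : 0 < α) (M₀ γ1 γ2 δ1 δ2 t ε : ℝ) (hM : 0 < M₀)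
    (ht : (γ1*t+δ1)^2 + (γ2*t+δ2)^2 + γ1^2 + γ2^2
        < M₀ * Real.exp (-(2*Real.log (1+2*α))))
    (hε : |ε| ≤ α * (volume {s : ℝ | (γ1*s+δ1)^2 + (γ2*s+δ2)^2 + γ1^2 + γ2^2
        < M₀ * Real.exp (-(2*Real.log (1+2*α)))}).toReal) :
    (γ1*(t+ε)+δ1)^2 + (γ2*(t+ε)+δ2)^2 + γ1^2 + γ2^2 < M₀ := by
  have h2α : (0:ℝ) < 1 + 2*α := by linarith
  have hex : Real.exp (-(2*Real.log (1+2*α))) = ((1+2*α)^2)⁻¹ := by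
    rw [Real.exp_neg]
    congr 1
    rw [two_mul, Real.exp_add, Real.exp_log h2α]
    ring
  set m := M₀ * Real.exp (-(2*Real.log (1+2*α))) with hm
  have hm_pos : 0 < m := by positivity
  have hmM : m * (1+2*α)^2 = M₀ := by
    rw [hm, hex]
    field_simp
  have hmltM : m < M₀ := by
    nlinarith [hm_pos, hα, hmM, mul_pos hm_pos hα, mul_pos (mul_pos hm_pos hα) hα]
  by_cases hγ : γ1 = 0 ∧ γ2 = 0
  · obtain ⟨e1, e2⟩ := hγ
    subst e1; subst e2
    have hset : {s : ℝ | (0*s+δ1)^2 + (0*s+δ2)^2 + (0:ℝ)^2 + (0:ℝ)^2 < m} = Set.univ := by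
      apply Set.eq_univ_of_forall
      intro s
      simp only [Set.mem_setOf_eq]
      calc (0*s+δ1)^2 + (0*s+δ2)^2 + (0:ℝ)^2 + (0:ℝ)^2
          = (0*t+δ1)^2 + (0*t+δ2)^2 + (0:ℝ)^2 + (0:ℝ)^2 := by ring
        _ < m := ht
    rw [hset] at hε
    simp only [Real.volume_univ, ENNReal.toReal_top, mul_zero] at hε
    have hε0 : ε = 0 := abs_eq_zero.1 (le_antisymm hε (abs_nonneg _))
    subst hε0
    calc (0*(t+0)+δ1)^2 + (0*(t+0)+δ2)^2 + (0:ℝ)^2 + (0:ℝ)^2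
        = (0*t+δ1)^2 + (0*t+δ2)^2 + (0:ℝ)^2 + (0:ℝ)^2 := by ring
      _ < m := ht
      _ < M₀ := hmltM
  · have hP : 0 < γ1^2 + γ2^2 := by
      rcases not_and_or.1 hγ with h' | h'
      · have : 0 < γ1^2 := by positivity
        nlinarith [sq_nonneg γ2]
      · have : 0 < γ2^2 := by positivity
        nlinarith [sq_nonneg γ1]
    obtain ⟨P, hPdef⟩ : ∃ P : ℝ, P = γ1^2 + γ2^2 := ⟨_, rfl⟩
    have hP' : 0 < P := hPdef ▸ hP
    obtain ⟨Q, hQdef⟩ : ∃ Q : ℝ, Q = γ1*δ1 + γ2*δ2 := ⟨_, rfl⟩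
    obtain ⟨K, hKdef⟩ : ∃ K : ℝ, K = δ1^2 + δ2^2 + γ1^2 + γ2^2 - Q^2/P := ⟨_, rfl⟩
    have hquad : ∀ s : ℝ, (γ1*s+δ1)^2 + (γ2*s+δ2)^2 + γ1^2 + γ2^2 = P*(s+Q/P)^2 + K := by
      intro s
      rw [hKdef, hQdef, hPdef]
      field_simp
      ring
    have hK : 0 < K := by
      have hle : Q^2/P ≤ δ1^2 + δ2^2 := by
        rw [div_le_iff₀ hP', hQdef, hPdef]
        nlinarith [sq_nonneg (γ1*δ2 - γ2*δ1)]
      rw [hKdef]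
      linarith [hle, hP]
    have hKm : K < m := by
      have htq := ht
      rw [hquad t] at htq
      nlinarith [mul_nonneg hP'.le (sq_nonneg (t+Q/P))]
    obtain ⟨r, hrdef⟩ : ∃ r : ℝ, r = Real.sqrt ((m-K)/P) := ⟨_, rfl⟩
    have hmK : 0 < m - K := by linarith
    have hr : 0 < r := by
      rw [hrdef]
      exact Real.sqrt_pos.2 (div_pos hmK hP')
    have hPr : P * r^2 = m - K := by
      rw [hrdef, Real.sq_sqrt (div_pos hmK hP').le]
      field_simp
    have hsq_t : (t+Q/P)^2 < r^2 := by
      have htq := ht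
      rw [hquad t] at htq
      by_contra hcon
      push_neg at hcon
      have := mul_le_mul_of_nonneg_left hcon hP'.le
      linarith
    have hset : {s : ℝ | (γ1*s+δ1)^2 + (γ2*s+δ2)^2 + γ1^2 + γ2^2 < m}
        = Set.Ioo (-(Q/P) - r) (-(Q/P) + r) := by
      ext s
      simp only [Set.mem_setOf_eq, Set.mem_Ioo]
      rw [hquad s]
      constructor
      · intro hs
        have hsq : (s+Q/P)^2 < r^2 := by
          by_contra hcon
          push_neg at hcon
          have := mul_le_mul_of_nonneg_left hcon hP'.le
          linarith
        have hb2 := abs_lt_of_sq_lt_sq' hsq hr.le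
        exact ⟨by linarith [hb2.1], by linarith [hb2.2]⟩
      · rintro ⟨h1', h2'⟩
        have huu : (s+Q/P)^2 < r^2 := sq_lt_sq' (by linarith) (by linarith)
        have := mul_lt_mul_of_pos_left huu hP'
        linarith
    rw [hset, Real.volume_Ioo] at hε
    have hvol : (ENNReal.ofReal ((-(Q/P) + r) - (-(Q/P) - r))).toReal = 2*r := by
      rw [ENNReal.toReal_ofReal (by linarith : (0:ℝ) ≤ (-(Q/P) + r) - (-(Q/P) - r))]
      ring
    rw [hvol] at hε
    have habs_t : |t + Q/P| < r := abs_lt.2 (abs_lt_of_sq_lt_sq' hsq_t hr.le)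
    have habs : |t + ε + Q/P| < (1+2*α) * r := by
      calc |t + ε + Q/P| = |(t + Q/P) + ε| := by rw [show t + ε + Q/P = (t + Q/P) + ε from by ring]
        _ ≤ |t + Q/P| + |ε| := abs_add_le _ _
        _ < r + 2*α*r := by
            have h2ar : |ε| ≤ 2*α*r := by linarith [hε]
            linarith
        _ = (1+2*α) * r := by ring
    have hsq' : (t + ε + Q/P)^2 < ((1+2*α)*r)^2 := by
      have h1' := abs_lt.1 habs
      exact sq_lt_sq' (by linarith [h1'.1]) h1'.2
    rw [hquad (t+ε)]
    have hexp2 : P*((1+2*α)*r)^2 = (1+2*α)^2 * (m - K) := by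
      rw [← hPr]; ring
    have hfin : P*((1+2*α)*r)^2 + K ≤ M₀ := by
      rw [hexp2]
      nlinarith [hmM, hK, hα, mul_pos hα hK, mul_pos (mul_pos hα hα) hK]
    have := mul_lt_mul_of_pos_left hsq' hP'
    linarith


/-- For every `α > 0` there is `R > 0` such that, for any horoball `𝔥 ⊆ ℍ³` and any
`g ∈ G = PSL₂(ℂ)`, writing `I = {t : π(g u_t) ∈ 𝔥}` and `J = {t : π(g u_t) ∈ 𝔥_R}`,
one has `J ± α·ℓ(J) ⊆ I`, where `ℓ(J)` is the length of `J`. -/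
theorem stmt_2 :
    ∀ α : ℝ, 0 < α → ∃ R : ℝ, 0 < R ∧
      ∀ (base : Option (ℝ × ℝ)) (h : ℝ), 0 < h →
      ∀ g : Matrix (Fin 2) (Fin 2) ℂ, g.det = 1 →
      ∀ t ∈ {t : ℝ | mob (g * uR t) basept ∈ horoball base h R},
      ∀ ε : ℝ,
        |ε| ≤ α * (volume {t : ℝ | mob (g * uR t) basept ∈ horoball base h R}).toReal →
        t + ε ∈ {t : ℝ | mob (g * uR t) basept ∈ horoball base h 0} := by
  intro α hα
  refine ⟨2*Real.log (1+2*α), ?_, ?_⟩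
  · have := Real.log_pos (by linarith : (1:ℝ) < 1+2*α)
    linarith
  · intro base h hh g hg t ht ε hε
    rcases base with _ | w
    · have hsetR : {s : ℝ | mob (g * uR s) basept ∈ horoball none h (2*Real.log (1+2*α))}
          = {s : ℝ | ((g 1 0).re*s + (g 1 1).re)^2 + ((g 1 0).im*s + (g 1 1).im)^2
              + (g 1 0).re^2 + (g 1 0).im^2 < h⁻¹ * Real.exp (-(2*Real.log (1+2*α)))} :=
        Set.ext fun s => mem_iff_none h _ hh g hg s
      have ht' := (mem_iff_none h _ hh g hg t).1 ht
      rw [hsetR] at hε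
      have hfin := key_quad α hα h⁻¹ (g 1 0).re (g 1 0).im (g 1 1).re (g 1 1).im t ε
        (by positivity) ht' hε
      exact (mem_iff_none h 0 hh g hg (t+ε)).2
        (by rw [neg_zero, Real.exp_zero, mul_one]; exact hfin)
    · have hsetR : {s : ℝ | mob (g * uR s) basept ∈ horoball (some w) h (2*Real.log (1+2*α))}
          = {s : ℝ | (((g 0 0).re - (w.1*(g 1 0).re - w.2*(g 1 0).im))*s
              + ((g 0 1).re - (w.1*(g 1 1).re - w.2*(g 1 1).im)))^2
            + (((g 0 0).im - (w.1*(g 1 0).im + w.2*(g 1 0).re))*s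
              + ((g 0 1).im - (w.1*(g 1 1).im + w.2*(g 1 1).re)))^2
            + ((g 0 0).re - (w.1*(g 1 0).re - w.2*(g 1 0).im))^2
            + ((g 0 0).im - (w.1*(g 1 0).im + w.2*(g 1 0).re))^2
            < (2*h) * Real.exp (-(2*Real.log (1+2*α)))} :=
        Set.ext fun s => mem_iff_some w h _ hh g hg s
      have ht' := (mem_iff_some w h _ hh g hg t).1 ht
      rw [hsetR] at hε
      have hfin := key_quad α hα (2*h)
        ((g 0 0).re - (w.1*(g 1 0).re - w.2*(g 1 0).im))
        ((g 0 0).im - (w.1*(g 1 0).im + w.2*(g 1 0).re))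
        ((g 0 1).re - (w.1*(g 1 1).re - w.2*(g 1 1).im))
        ((g 0 1).im - (w.1*(g 1 1).im + w.2*(g 1 1).re)) t ε
        (by positivity) ht' hε
      exact (mem_iff_some w h 0 hh g hg (t+ε)).2
        (by rw [neg_zero, Real.exp_zero, mul_one]; exact hfin)
end

section
/- In the upper half-space model, let 𝔥 be the horoball {x² + y² + (z−h)² ≤ h²} based at 0 with Euclidean diameter 2h, and let L = {(t, y₀, 1) : t ∈ ℝ} be a horizontal horocycle at height 1. If R > 0 satisfies e^R > (α+1)², then the Euclidean length of L ∩ 𝔥_R is at most 1/(α+1) times the Euclidean length of L ∩ 𝔥, where 𝔥_R is the horoball {x² + y² ≤ 2zhe^{−R} − z²} at depth R inside 𝔥. -/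
open MeasureTheory

/- Both intersections are intervals centred at `0`, so their lengths are `2√c` for the
respective right-hand sides `c`; the hypothesis `(α + 1)² e^{-R} < 1` makes
`(α + 1)² (2h e^{-R} - 1 - y₀²) ≤ 2h - 1 - y₀²`, and taking square roots gives the claim. -/

lemma volume_setOf_sq_le_toReal (c : ℝ) :
    (volume {t : ℝ | t ^ 2 ≤ c}).toReal = 2 * √c := by
  rcases lt_or_ge c 0 with hc | hc
  · have hempty : {t : ℝ | t ^ 2 ≤ c} = ∅ :=
      Set.eq_empty_of_forall_notMem fun t ht => (sq_nonneg t).not_gt (ht.trans_lt hc)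
    simp [hempty, Real.sqrt_eq_zero_of_nonpos hc.le]
  · have hIcc : {t : ℝ | t ^ 2 ≤ c} = Set.Icc (-√c) √c := by
      ext t
      exact Real.sq_le hc
    rw [hIcc, Real.volume_Icc, ENNReal.toReal_ofReal (by linarith [Real.sqrt_nonneg c])]
    ring

lemma mul_sqrt_sub_le_sqrt_sub {k a b ε : ℝ} (hk : 1 ≤ k) (ha : 0 ≤ a) (hb : 0 ≤ b)
    (hε : k ^ 2 * ε ≤ 1) : k * √(a * ε - b) ≤ √(a - b) := by
  have hscaled : k ^ 2 * (a * ε - b) ≤ a - b := by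
    have hb' : b ≤ k ^ 2 * b := le_mul_of_one_le_left hb (one_le_pow₀ hk)
    nlinarith [mul_le_of_le_one_right ha hε]
  calc k * √(a * ε - b) = √(k ^ 2 * (a * ε - b)) := by
        rw [Real.sqrt_mul (sq_nonneg k), Real.sqrt_sq (by linarith)]
    _ ≤ √(a - b) := Real.sqrt_le_sqrt hscaled

/-- In the upper half-space model, let `𝔥 = {x² + y² + (z−h)² ≤ h²}` be the horoball based
at `0` of Euclidean diameter `2h`, and `L = {(t, y₀, 1)}` the horizontal horocycle at
height `1`.  The intersections are `L ∩ 𝔥 = {t : t² ≤ 2h − 1 − y₀²}` and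
`L ∩ 𝔥_R = {t : t² ≤ 2he^{−R} − 1 − y₀²}`, where `𝔥_R` is the horoball at depth `R`
inside `𝔥`.  If `e^R > (α+1)²` then the length of `L ∩ 𝔥_R` is at most `1/(α+1)` times
the length of `L ∩ 𝔥`. -/
theorem stmt_3 (α h y₀ R : ℝ) (hα : 0 < α) (hh : 0 < h)
    (hR : (α + 1) ^ 2 < Real.exp R) :
    (volume {t : ℝ | t ^ 2 ≤ 2 * h * Real.exp (-R) - 1 - y₀ ^ 2}).toReal ≤
      (volume {t : ℝ | t ^ 2 ≤ 2 * h - 1 - y₀ ^ 2}).toReal / (α + 1) := by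
  have hdepth : (α + 1) ^ 2 * Real.exp (-R) ≤ 1 := by
    rw [Real.exp_neg, ← div_eq_mul_inv]
    exact ((div_lt_one (Real.exp_pos R)).mpr hR).le
  have hsqrt := mul_sqrt_sub_le_sqrt_sub (by linarith) (by linarith : 0 ≤ 2 * h)
    (by positivity : 0 ≤ 1 + y₀ ^ 2) hdepth
  rw [volume_setOf_sq_le_toReal, volume_setOf_sq_le_toReal, le_div_iff₀ (by linarith),
    sub_sub, sub_sub]
  linarith
end

section
/- Let k ≥ 1 and let T ⊂ ℝ be a globally k-thick set containing 0. Suppose {J_n} is a collection of pairwise disjoint open intervals in ℝ, each of finite length ℓ_n, and suppose each J_n sits inside an open interval I_n with J_n ± 2k·ℓ_n ⊆ I_n, where the I_n are pairwise disjoint and 0 ∉ ⋃ I_n. Then the set T − ⋃ J_n is 4k-thick: for every s > 0, (T − ⋃ J_n) ∩ ([−4ks, −s] ∪ [s, 4ks]) ≠ ∅. -/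
/-- `T ⊆ ℝ` is `k`-thick: for every `s > 0`, `T ∩ ([−ks, −s] ∪ [s, ks]) ≠ ∅`. -/
def KThick (k : ℝ) (T : Set ℝ) : Prop :=
  ∀ s : ℝ, 0 < s → ∃ t ∈ T, t ∈ Set.Icc (-(k * s)) (-s) ∪ Set.Icc s (k * s)

/-- `T ⊆ ℝ` is globally `k`-thick: `T ≠ ∅` and `T − t` is `k`-thick for every `t ∈ T`. -/
def GloballyKThick (k : ℝ) (T : Set ℝ) : Prop :=
  T.Nonempty ∧ ∀ t ∈ T, KThick k ((fun x => x - t) '' T)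

/-!
Probe `T` at `0` on the scale `2s` to get `x ∈ T` with `2s ≤ |x| ≤ 2ks`. If `x` lies in
no `J n` we are done. Otherwise `x ∈ J n = (a, b)`; probing `T` at `x` on the scale
`σ = max (x - a) (b - x) ≤ ℓ` gives `w ∈ T` outside `J n` with `|w - x| ≤ kℓ`, so `w`
lies in `I n \ J n` and hence in no `J m`. Since `I n ⊇ J n ± 2kℓ` avoids `0`, we have
`2kℓ ≤ |x|`, so `|w - x| ≤ |x| / 2` and `s ≤ |w| ≤ 3ks`.
-/

open Set

lemma mem_Icc_neg_union_Icc_iff {K s t : ℝ} (hs : 0 ≤ s) :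
    t ∈ Icc (-(K * s)) (-s) ∪ Icc s (K * s) ↔ s ≤ |t| ∧ |t| ≤ K * s := by
  rcases le_total 0 t with ht | ht
  · rw [abs_of_nonneg ht]
    constructor
    · rintro (⟨h₁, h₂⟩ | ⟨h₁, h₂⟩) <;> constructor <;> linarith
    · exact fun h => Or.inr h
  · rw [abs_of_nonpos ht]
    constructor
    · rintro (⟨h₁, h₂⟩ | ⟨h₁, h₂⟩) <;> constructor <;> linarith
    · exact fun ⟨h₁, h₂⟩ => Or.inl ⟨by linarith, by linarith⟩

lemma kThick_iff {k : ℝ} {T : Set ℝ} :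
    KThick k T ↔ ∀ s, 0 < s → ∃ t ∈ T, s ≤ |t| ∧ |t| ≤ k * s :=
  forall₂_congr fun _ hs => exists_congr fun _ => and_congr_right fun _ =>
    mem_Icc_neg_union_Icc_iff hs.le

lemma KThick.one_le {k : ℝ} {T : Set ℝ} (h : KThick k T) : 1 ≤ k := by
  obtain ⟨t, -, h₁, h₂⟩ := kThick_iff.1 h 1 one_pos
  linarith

namespace GloballyKThick

variable {k : ℝ} {T : Set ℝ}

lemma one_le (h : GloballyKThick k T) : 1 ≤ k :=
  let ⟨t, ht⟩ := h.1
  (h.2 t ht).one_le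

lemma exists_abs_sub (h : GloballyKThick k T) {t s : ℝ} (ht : t ∈ T) (hs : 0 < s) :
    ∃ w ∈ T, s ≤ |w - t| ∧ |w - t| ≤ k * s := by
  obtain ⟨_, ⟨w, hw, rfl⟩, hwt⟩ := kThick_iff.1 (h.2 t ht) s hs
  exact ⟨w, hw, hwt⟩

lemma exists_notMem_Ioo (h : GloballyKThick k T) {a b x : ℝ} (hx : x ∈ T)
    (hxJ : x ∈ Ioo a b) :
    ∃ w ∈ T, w ∉ Ioo a b ∧ |w - x| ≤ k * (b - a) := by
  obtain ⟨hax, hxb⟩ := hxJ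
  obtain ⟨w, hw, hσw, hwσ⟩ :=
    h.exists_abs_sub hx (lt_max_of_lt_left (sub_pos.2 hax) : 0 < max (x - a) (b - x))
  refine ⟨w, hw, fun ⟨haw, hwb⟩ => ?_, ?_⟩
  · exact hσw.not_gt (abs_sub_lt_iff.2
      ⟨lt_max_of_lt_right (by linarith), lt_max_of_lt_left (by linarith)⟩)
  · calc |w - x| ≤ k * max (x - a) (b - x) := hwσ
      _ ≤ k * (b - a) := by
        gcongr
        · linarith [h.one_le]
        · exact max_le (by linarith) (by linarith)

end GloballyKThick

lemma mem_Ioo_sub_add_of_abs_sub_le {a b x w r R : ℝ} (hx : x ∈ Ioo a b) (hrR : r < R)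
    (hw : |w - x| ≤ r) : w ∈ Ioo (a - R) (b + R) := by
  obtain ⟨h₁, h₂⟩ := abs_le.1 hw
  exact ⟨by linarith [hx.1], by linarith [hx.2]⟩

lemma le_abs_of_zero_notMem_Ioo {a b r x : ℝ} (h₀ : (0 : ℝ) ∉ Ioo (a - r) (b + r))
    (hx : x ∈ Ioo a b) : r ≤ |x| := by
  by_contra! h
  obtain ⟨h₁, h₂⟩ := abs_lt.1 h
  exact h₀ ⟨by linarith [hx.1], by linarith [hx.2]⟩

lemma notMem_iUnion_of_mem_diff {ι α : Type*} {I J : ι → Set α} (hJI : ∀ i, J i ⊆ I i)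
    (hI : Pairwise (Function.onFun Disjoint I)) {n : ι} {w : α} (hwI : w ∈ I n)
    (hwJ : w ∉ J n) :
    w ∉ ⋃ i, J i := by
  simp only [mem_iUnion, not_exists]
  intro m hwm
  obtain rfl | hmn := eq_or_ne m n
  · exact hwJ hwm
  · exact disjoint_left.1 (hI hmn) (hJI m hwm) hwI

theorem stmt_4_general (k : ℝ) (T : Set ℝ)
    (hT : GloballyKThick k T) (h0 : (0 : ℝ) ∈ T)
    (a b c d : ℕ → ℝ)
    (hIdisj : Pairwise (Function.onFun Disjoint fun n => Set.Ioo (c n) (d n)))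
    (hJI : ∀ n, Set.Ioo (a n - 2 * k * (b n - a n)) (b n + 2 * k * (b n - a n)) ⊆
      Set.Ioo (c n) (d n))
    (h0I : ∀ n, (0 : ℝ) ∉ Set.Ioo (c n) (d n)) :
    KThick (4 * k) (T \ ⋃ n, Set.Ioo (a n) (b n)) := by
  have hk : 0 < k := one_pos.trans_le hT.one_le
  have hmemI (n : ℕ) {x w r : ℝ} (hx : x ∈ Ioo (a n) (b n)) (hr : r < 2 * k * (b n - a n))
      (hw : |w - x| ≤ r) : w ∈ Ioo (c n) (d n) :=
    hJI n (mem_Ioo_sub_add_of_abs_sub_le hx hr hw)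
  rw [kThick_iff]
  intro s hs
  obtain ⟨x, hxT, hsx, hxs⟩ := hT.exists_abs_sub h0 (by positivity : 0 < 2 * s)
  rw [sub_zero] at hsx hxs
  suffices ∃ w ∈ T \ ⋃ n, Ioo (a n) (b n), |w - x| ≤ |x| / 2 by
    obtain ⟨w, hw, hwx⟩ := this
    have h₁ := abs_sub_abs_le_abs_sub w x
    have h₂ := abs_sub_abs_le_abs_sub x w
    rw [abs_sub_comm x w] at h₂
    exact ⟨w, hw, by linarith, by linarith⟩
  by_cases hxJ : x ∈ ⋃ n, Ioo (a n) (b n)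
  · obtain ⟨n, hxn⟩ := mem_iUnion.1 hxJ
    have hℓ : 0 < k * (b n - a n) := mul_pos hk (sub_pos.2 (hxn.1.trans hxn.2))
    obtain ⟨w, hwT, hwJ, hwx⟩ := hT.exists_notMem_Ioo hxT hxn
    have hwI : w ∈ Ioo (c n) (d n) := hmemI n hxn (by linarith) hwx
    have hJsubI (m : ℕ) : Ioo (a m) (b m) ⊆ Ioo (c m) (d m) := fun z hz =>
      hmemI m hz (mul_pos (mul_pos two_pos hk) (sub_pos.2 (hz.1.trans hz.2))) (by simp)
    have hx_far : 2 * k * (b n - a n) ≤ |x| :=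
      le_abs_of_zero_notMem_Ioo (fun h => h0I n (hJI n h)) hxn
    exact ⟨w, ⟨hwT, notMem_iUnion_of_mem_diff hJsubI hIdisj hwI hwJ⟩, by linarith⟩
  · exact ⟨x, ⟨hxT, hxJ⟩, by simp only [sub_self, abs_zero]; positivity⟩

/-- Let `k ≥ 1` and `T ⊆ ℝ` be globally `k`-thick with `0 ∈ T`.  Suppose `J n = (aₙ, bₙ)`
are pairwise disjoint open intervals of finite length `ℓₙ = bₙ − aₙ`, each contained in an
open interval `I n = (cₙ, dₙ)` with `J n ± 2kℓₙ ⊆ I n`, where the `I n` are pairwise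
disjoint and `0 ∉ ⋃ I n`.  Then `T − ⋃ J n` is `4k`-thick. -/
theorem stmt_4 (k : ℝ) (hk : 1 ≤ k) (T : Set ℝ)
    (hT : GloballyKThick k T) (h0 : (0 : ℝ) ∈ T)
    (a b c d : ℕ → ℝ) (hab : ∀ n, a n ≤ b n)
    (hJdisj : Pairwise (Function.onFun Disjoint fun n => Set.Ioo (a n) (b n)))
    (hIdisj : Pairwise (Function.onFun Disjoint fun n => Set.Ioo (c n) (d n)))
    (hJI : ∀ n, Set.Ioo (a n - 2 * k * (b n - a n)) (b n + 2 * k * (b n - a n)) ⊆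
      Set.Ioo (c n) (d n))
    (h0I : ∀ n, (0 : ℝ) ∉ Set.Ioo (c n) (d n)) :
    KThick (4 * k) (T \ ⋃ n, Set.Ioo (a n) (b n)) :=
  stmt_4_general k T hT h0 a b c d hIdisj hJI h0I
end

section
/- Let M_n be a sequence in i·M₂(ℝ) (purely imaginary 2×2 real matrices under the identification with 2×2 complex matrices) with M_n ∉ 𝒱 := {(0, is; 0, 0) : s ∈ ℝ} and M_n → 0. Then the closure of ⋃_n {u M_n u⁻¹ : u ∈ U} contains a half-line in 𝒱, where U = {(1, t; 0, 1) : t ∈ ℝ}. -/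
/-- The Lie algebra line `𝒱 = {(0, is; 0, 0) : s ∈ ℝ}`. -/
def VLine : Set (Matrix (Fin 2) (Fin 2) ℂ) :=
  {m | ∃ s : ℝ, m = !![0, (s : ℂ) * Complex.I; 0, 0]}

open Complex Filter Matrix

lemma conj_eq (a b c t : ℝ) :
    uR t * (Complex.I • (!![a, b; c, -a] : Matrix (Fin 2) (Fin 2) ℝ).map Complex.ofReal) * uR (-t)
      = Complex.I • (!![a + t*c, b - 2*t*a - t^2*c; c, -(a + t*c)] :
          Matrix (Fin 2) (Fin 2) ℝ).map Complex.ofReal := by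
  ext i j
  fin_cases i <;> fin_cases j <;>
    simp [uR, Matrix.mul_apply, Fin.sum_univ_succ, Matrix.map_apply, Matrix.vecMul,
      dotProduct] <;> ring

lemma tend_aux (f : ℕ → Matrix (Fin 2) (Fin 2) ℝ) (L : Matrix (Fin 2) (Fin 2) ℝ)
    (h : ∀ i j, Tendsto (fun n => f n i j) atTop (nhds (L i j))) :
    Tendsto (fun n => Complex.I • (f n).map Complex.ofReal) atTop
      (nhds (Complex.I • L.map Complex.ofReal)) := by
  apply tendsto_pi_nhds.mpr
  intro i
  apply tendsto_pi_nhds.mpr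
  intro j
  have : Tendsto (fun n => (Complex.I * (f n i j : ℂ))) atTop (nhds (Complex.I * (L i j : ℂ))) :=
    ((Complex.continuous_ofReal.tendsto _).comp (h i j)).const_mul _
  simpa [Matrix.smul_apply, Matrix.map_apply] using this

lemma targ_eq (s : ℝ) : !![0, (s : ℂ) * Complex.I; 0, 0]
    = Complex.I • (!![(0:ℝ), s; 0, 0] : Matrix (Fin 2) (Fin 2) ℝ).map Complex.ofReal := by
  ext i j
  fin_cases i <;> fin_cases j <;> simp [Matrix.map_apply, mul_comm]

lemma aux_half (X : ℕ → Matrix (Fin 2) (Fin 2) ℝ)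
    (M : ℕ → Matrix (Fin 2) (Fin 2) ℂ)
    (hM : ∀ n, M n = Complex.I • (X n).map Complex.ofReal)
    (hd : ∀ n, X n 1 1 = - X n 0 0)
    (hne : ∀ n, X n 0 0 ≠ 0 ∨ X n 1 0 ≠ 0)
    (hα : Tendsto (fun n => X n 0 0) atTop (nhds 0))
    (hβ : Tendsto (fun n => X n 0 1) atTop (nhds 0))
    (hγ : Tendsto (fun n => X n 1 0) atTop (nhds 0))
    (s : ℝ) (hs : s ≠ 0)
    (hfreq : ∃ᶠ n in atTop, s * X n 1 0 ≤ 0) :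
    !![0, (s : ℂ) * Complex.I; 0, 0] ∈
      closure (⋃ n, {m | ∃ t : ℝ, m = uR t * M n * uR (-t)}) := by
  have hev : ∀ᶠ n in atTop, |X n 0 1| < |s| := by
    have := Metric.tendsto_nhds.mp hβ |s| (abs_pos.mpr hs)
    simpa [Real.dist_eq] using this
  obtain ⟨φ, hφ, hP⟩ := Filter.extraction_of_frequently_atTop (hfreq.and_eventually hev)
  set a : ℕ → ℝ := fun k => X (φ k) 0 0 with ha
  set b : ℕ → ℝ := fun k => X (φ k) 0 1 with hb
  set c : ℕ → ℝ := fun k => X (φ k) 1 0 with hc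
  have hdisc : ∀ k, 0 ≤ a k ^ 2 + c k * (b k - s) := by
    intro k
    obtain ⟨h1, h2⟩ := hP k
    have h2' := abs_lt.mp h2
    rcases hs.lt_or_gt with h | h
    · have hb1 : s < b k := by
        have := h2'.1; rw [abs_of_neg h] at this; linarith
      have hc1 : 0 ≤ c k := by nlinarith
      nlinarith [sq_nonneg (a k), mul_nonneg hc1 (by linarith : (0:ℝ) ≤ b k - s)]
    · have hb1 : b k < s := by
        have := h2'.2; rw [abs_of_pos h] at this; linarith
      have hc1 : c k ≤ 0 := by nlinarith
      nlinarith [sq_nonneg (a k), mul_nonneg (by linarith : (0:ℝ) ≤ -c k)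
        (by linarith : (0:ℝ) ≤ s - b k)]
  set w : ℕ → ℝ := fun k => Real.sqrt (a k ^ 2 + c k * (b k - s)) with hw
  have hwsq : ∀ k, w k ^ 2 = a k ^ 2 + c k * (b k - s) := fun k => Real.sq_sqrt (hdisc k)
  set t : ℕ → ℝ := fun k => if c k = 0 then (b k - s) / (2 * a k) else (w k - a k) / c k with ht
  set v : ℕ → ℝ := fun k => if c k = 0 then a k else w k with hv
  have hXeq : ∀ k, X (φ k) = !![a k, b k; c k, -(a k)] := by
    intro k
    rw [Matrix.eta_fin_two (X (φ k)), hd (φ k)]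
  have key : ∀ k, uR (t k) * M (φ k) * uR (-(t k))
      = Complex.I • (!![v k, s; c k, -(v k)] : Matrix (Fin 2) (Fin 2) ℝ).map Complex.ofReal := by
    intro k
    rw [hM (φ k), hXeq k, conj_eq]
    have e1 : a k + t k * c k = v k := by
      by_cases h : c k = 0
      · simp [ht, hv, h]
      · have htk : t k = (w k - a k) / c k := by simp [ht, h]
        have hvk : v k = w k := by simp [hv, h]
        rw [htk, hvk]
        field_simp
        ring
    have e2 : b k - 2 * t k * a k - t k ^ 2 * c k = s := by
      by_cases h : c k = 0
      · have hane : a k ≠ 0 := by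
          rcases hne (φ k) with h' | h'
          · exact h'
          · exact absurd h h'
        have : t k = (b k - s) / (2 * a k) := by simp [ht, h]
        rw [this, h]
        field_simp
        ring
      · have htk : t k = (w k - a k) / c k := by simp [ht, h]
        rw [htk]
        have := hwsq k
        field_simp
        nlinarith [hwsq k]
    rw [e1, e2]
  have hφtop : Tendsto φ atTop atTop := hφ.tendsto_atTop
  have hca : Tendsto a atTop (nhds 0) := hα.comp hφtop
  have hcb : Tendsto b atTop (nhds 0) := hβ.comp hφtop
  have hcc : Tendsto c atTop (nhds 0) := hγ.comp hφtop
  have hwlim : Tendsto w atTop (nhds 0) := by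
    have h1 : Tendsto (fun k => a k ^ 2 + c k * (b k - s)) atTop (nhds 0) := by
      have hsub : Tendsto (fun k => b k - s) atTop (nhds (0 - s)) :=
        hcb.sub (tendsto_const_nhds (x := s))
      have := (hca.pow 2).add (hcc.mul hsub)
      simpa using this
    have := (Real.continuous_sqrt.tendsto 0).comp h1
    simpa [hw, Function.comp_def] using this
  have hvlim : Tendsto v atTop (nhds 0) := by
    have hbound : ∀ k, ‖v k‖ ≤ |a k| + |w k| := by
      intro k
      by_cases h : c k = 0
      · simp only [hv, if_pos h, Real.norm_eq_abs]
        exact le_add_of_nonneg_right (abs_nonneg _)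
      · simp only [hv, if_neg h, Real.norm_eq_abs]
        exact le_add_of_nonneg_left (abs_nonneg _)
    have hg : Tendsto (fun k => |a k| + |w k|) atTop (nhds 0) := by
      have := (hca.abs.add hwlim.abs)
      simpa using this
    exact squeeze_zero_norm hbound hg
  have hten : Tendsto (fun k => uR (t k) * M (φ k) * uR (-(t k))) atTop
      (nhds !![0, (s : ℂ) * Complex.I; 0, 0]) := by
    rw [funext key, targ_eq s]
    apply tend_aux
    intro i j
    fin_cases i <;> fin_cases j <;> simp
    · exact hvlim
    · exact hcc
    · simpa using hvlim.neg
  exact mem_closure_of_tendsto hten (Filter.Eventually.of_forall fun k =>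
    Set.mem_iUnion.mpr ⟨φ k, ⟨t k, rfl⟩⟩)

/-- Let `Mₙ` be a sequence of purely imaginary (trace-zero) `2×2` matrices,
`Mₙ = i·Xₙ` with `Xₙ` real, with `Mₙ ∉ 𝒱` and `Mₙ → 0`.  Then the closure of
`⋃ₙ {u Mₙ u⁻¹ : u ∈ U}` contains a half-line of `𝒱`:
either `{(0, is; 0, 0) : s ≥ 0}` or `{(0, is; 0, 0) : s ≤ 0}`. -/
theorem stmt_6 (X : ℕ → Matrix (Fin 2) (Fin 2) ℝ)
    (M : ℕ → Matrix (Fin 2) (Fin 2) ℂ)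
    (hM : ∀ n, M n = Complex.I • (X n).map Complex.ofReal)
    (htr : ∀ n, Matrix.trace (M n) = 0)
    (hV : ∀ n, M n ∉ VLine)
    (hlim : Filter.Tendsto M Filter.atTop (nhds 0)) :
    (∀ s : ℝ, 0 ≤ s → !![0, (s : ℂ) * Complex.I; 0, 0] ∈
        closure (⋃ n, {m | ∃ t : ℝ, m = uR t * M n * uR (-t)})) ∨
    (∀ s : ℝ, s ≤ 0 → !![0, (s : ℂ) * Complex.I; 0, 0] ∈
        closure (⋃ n, {m | ∃ t : ℝ, m = uR t * M n * uR (-t)})) := by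
  have hd : ∀ n, X n 1 1 = - X n 0 0 := by
    intro n
    have h2 : ((X n 0 0 : ℂ) + X n 1 1) = 0 := by
      simpa [hM, Matrix.trace_fin_two, Matrix.smul_apply, Matrix.map_apply, smul_eq_mul]
        using htr n
    have h3 : X n 0 0 + X n 1 1 = 0 := by exact_mod_cast h2
    linarith
  have hne : ∀ n, X n 0 0 ≠ 0 ∨ X n 1 0 ≠ 0 := by
    intro n
    by_contra h
    push_neg at h
    obtain ⟨h1, h2⟩ := h
    apply hV n
    refine ⟨X n 0 1, ?_⟩
    rw [hM n, Matrix.eta_fin_two (X n), hd n, h1, h2]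
    ext i j
    fin_cases i <;> fin_cases j <;> simp [Matrix.map_apply, mul_comm]
  have hent : ∀ i j, Tendsto (fun n => X n i j) atTop (nhds 0) := by
    intro i j
    have h1 : Tendsto (fun n => M n i j) atTop (nhds 0) := by
      have := tendsto_pi_nhds.mp (tendsto_pi_nhds.mp hlim i) j
      simpa using this
    have h2 : Tendsto (fun n => (M n i j).im) atTop (nhds 0) := by
      have := (Complex.continuous_im.tendsto 0).comp h1
      simpa [Function.comp_def] using this
    have h3 : (fun n => (M n i j).im) = fun n => X n i j := by
      funext n
      simp [hM, Matrix.smul_apply, Matrix.map_apply, smul_eq_mul, Complex.mul_im]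
    rwa [h3] at h2
  have hzero : !![0, ((0:ℝ) : ℂ) * Complex.I; 0, 0] ∈
      closure (⋃ n, {m | ∃ t : ℝ, m = uR t * M n * uR (-t)}) := by
    have he : !![0, ((0:ℝ) : ℂ) * Complex.I; 0, 0] = (0 : Matrix (Fin 2) (Fin 2) ℂ) := by
      ext i j; fin_cases i <;> fin_cases j <;> simp
    rw [he]
    apply mem_closure_of_tendsto hlim
    apply Filter.Eventually.of_forall
    intro n
    apply Set.mem_iUnion.mpr
    refine ⟨n, 0, ?_⟩
    have h1 : uR 0 = 1 := by
      ext i j; fin_cases i <;> fin_cases j <;> simp [uR]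
    rw [neg_zero, h1, one_mul, mul_one]
  by_cases hfc : ∃ᶠ n in atTop, X n 1 0 ≤ 0
  · left
    intro s hs
    rcases hs.eq_or_lt with h | h
    · rw [← h]; exact hzero
    · exact aux_half X M hM hd hne (hent 0 0) (hent 0 1) (hent 1 0) s (ne_of_gt h)
        (hfc.mono fun n hn => mul_nonpos_iff.mpr (Or.inl ⟨h.le, hn⟩))
  · right
    intro s hs
    rcases hs.eq_or_lt with h | h
    · rw [h]; exact hzero
    · have hev : ∀ᶠ n in atTop, 0 < X n 1 0 := by
        have := Filter.not_frequently.mp hfc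
        exact this.mono fun n hn => lt_of_not_ge hn
      exact aux_half X M hM hd hne (hent 0 0) (hent 0 1) (hent 1 0) s (ne_of_lt h)
        (hev.frequently.mono fun n hn => mul_nonpos_iff.mpr (Or.inr ⟨h.le, hn.le⟩))
end

section
/- Let q_a(x₁,x₂,x₃,x₄) = 7x₁² + 7x₂² − x₃² + a x₄² for a positive integer a. If a ≡ −1 (mod 8), then q_a does not represent 0 nontrivially over ℚ. -/
/-! Reduce modulo 8 using `a ≡ -1`: an integer zero `(u, v, w, t)` of `q_a` gives
`w² ≡ -(u² + v² + t²) (mod 8)`, and since squares modulo 8 lie in `{0, 1, 4}` this forces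
`u, v, w, t` to be even. Halving gives another zero, so every integer zero is divisible by all
powers of 2 and hence vanishes; clearing denominators transfers this to `ℚ`. -/

def qForm {R : Type*} [CommRing R] (a x₁ x₂ x₃ x₄ : R) : R :=
  7 * x₁ ^ 2 + 7 * x₂ ^ 2 - x₃ ^ 2 + a * x₄ ^ 2

section qForm

variable {R S : Type*} [CommRing R] [CommRing S]

theorem map_qForm (f : R →+* S) (a x₁ x₂ x₃ x₄ : R) :
    f (qForm a x₁ x₂ x₃ x₄) = qForm (f a) (f x₁) (f x₂) (f x₃) (f x₄) := by
  simp [qForm, map_ofNat f 7]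

theorem qForm_mul (c a x₁ x₂ x₃ x₄ : R) :
    qForm a (c * x₁) (c * x₂) (c * x₃) (c * x₄) = c ^ 2 * qForm a x₁ x₂ x₃ x₄ := by
  unfold qForm; ring

end qForm

theorem ZMod.four_mul_eq_zero_of_qForm_seven_eq_zero :
    ∀ u v w t : ZMod 8, qForm 7 u v w t = 0 →
      4 * u = 0 ∧ 4 * v = 0 ∧ 4 * w = 0 ∧ 4 * t = 0 := by
  unfold qForm; decide

theorem Int.two_dvd_of_four_mul_intCast_eq_zero {y : ℤ} (h : (4 * y : ZMod 8) = 0) : 2 ∣ y := by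
  rw [← Int.cast_ofNat, ← Int.cast_mul, ZMod.intCast_zmod_eq_zero_iff_dvd] at h
  omega

namespace Int

variable {a : ℤ}

theorem two_dvd_of_qForm_eq_zero (h8 : a % 8 = 7) {y₁ y₂ y₃ y₄ : ℤ}
    (h : qForm a y₁ y₂ y₃ y₄ = 0) :
    2 ∣ y₁ ∧ 2 ∣ y₂ ∧ 2 ∣ y₃ ∧ 2 ∣ y₄ := by
  have ha : (a : ZMod 8) = 7 := by
    rw [← ZMod.intCast_mod, Nat.cast_ofNat, h8]; rfl
  have hmod := congrArg (Int.castRingHom (ZMod 8)) h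
  rw [map_qForm, map_zero, eq_intCast, ha] at hmod
  obtain ⟨h₁, h₂, h₃, h₄⟩ := ZMod.four_mul_eq_zero_of_qForm_seven_eq_zero _ _ _ _ hmod
  exact ⟨two_dvd_of_four_mul_intCast_eq_zero h₁, two_dvd_of_four_mul_intCast_eq_zero h₂,
    two_dvd_of_four_mul_intCast_eq_zero h₃, two_dvd_of_four_mul_intCast_eq_zero h₄⟩

theorem two_pow_dvd_of_qForm_eq_zero (h8 : a % 8 = 7) (k : ℕ) :
    ∀ {y₁ y₂ y₃ y₄ : ℤ}, qForm a y₁ y₂ y₃ y₄ = 0 →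
      2 ^ k ∣ y₁ ∧ 2 ^ k ∣ y₂ ∧ 2 ^ k ∣ y₃ ∧ 2 ^ k ∣ y₄ := by
  induction k with
  | zero => simp
  | succ k ih =>
    intro y₁ y₂ y₃ y₄ h
    obtain ⟨⟨z₁, rfl⟩, ⟨z₂, rfl⟩, ⟨z₃, rfl⟩, ⟨z₄, rfl⟩⟩ := two_dvd_of_qForm_eq_zero h8 h
    have hz : qForm a z₁ z₂ z₃ z₄ = 0 := by
      rw [qForm_mul] at h
      exact (mul_eq_zero.1 h).resolve_left (by norm_num)
    obtain ⟨d₁, d₂, d₃, d₄⟩ := ih hz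
    simp only [pow_succ', mul_dvd_mul_left, d₁, d₂, d₃, d₄, and_self]

theorem eq_zero_of_forall_two_pow_dvd {y : ℤ} (h : ∀ k : ℕ, 2 ^ k ∣ y) : y = 0 := by
  by_contra hy
  exact FiniteMultiplicity.not_iff_forall.2 h (finiteMultiplicity_iff.2 ⟨by norm_num, hy⟩)

theorem eq_zero_of_qForm_eq_zero (h8 : a % 8 = 7) {y₁ y₂ y₃ y₄ : ℤ}
    (h : qForm a y₁ y₂ y₃ y₄ = 0) : y₁ = 0 ∧ y₂ = 0 ∧ y₃ = 0 ∧ y₄ = 0 :=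
  ⟨eq_zero_of_forall_two_pow_dvd fun k ↦ (two_pow_dvd_of_qForm_eq_zero h8 k h).1,
    eq_zero_of_forall_two_pow_dvd fun k ↦ (two_pow_dvd_of_qForm_eq_zero h8 k h).2.1,
    eq_zero_of_forall_two_pow_dvd fun k ↦ (two_pow_dvd_of_qForm_eq_zero h8 k h).2.2.1,
    eq_zero_of_forall_two_pow_dvd fun k ↦ (two_pow_dvd_of_qForm_eq_zero h8 k h).2.2.2⟩

end Int

theorem Rat.exists_intCast_eq_mul_of_den_dvd {x : ℚ} {n : ℕ} (h : x.den ∣ n) :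
    ∃ m : ℤ, (m : ℚ) = n * x := by
  obtain ⟨k, rfl⟩ := h
  exact ⟨x.num * k, by push_cast; rw [← x.mul_den_eq_num]; ring⟩

theorem stmt_11_general (a : ℤ) (h8 : a % 8 = 7)
    (x₁ x₂ x₃ x₄ : ℚ)
    (h : 7 * x₁ ^ 2 + 7 * x₂ ^ 2 - x₃ ^ 2 + (a : ℚ) * x₄ ^ 2 = 0) :
    x₁ = 0 ∧ x₂ = 0 ∧ x₃ = 0 ∧ x₄ = 0 := by
  set d : ℕ := x₁.den * x₂.den * x₃.den * x₄.den
  have hd : (d : ℚ) ≠ 0 := by positivity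
  obtain ⟨y₁, hy₁⟩ := Rat.exists_intCast_eq_mul_of_den_dvd (x := x₁) (n := d)
    ⟨x₂.den * x₃.den * x₄.den, by ring⟩
  obtain ⟨y₂, hy₂⟩ := Rat.exists_intCast_eq_mul_of_den_dvd (x := x₂) (n := d)
    ⟨x₁.den * x₃.den * x₄.den, by ring⟩
  obtain ⟨y₃, hy₃⟩ := Rat.exists_intCast_eq_mul_of_den_dvd (x := x₃) (n := d)
    ⟨x₁.den * x₂.den * x₄.den, by ring⟩
  obtain ⟨y₄, hy₄⟩ := Rat.exists_intCast_eq_mul_of_den_dvd (x := x₄) (n := d)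
    ⟨x₁.den * x₂.den * x₃.den, by ring⟩
  have hy : qForm a y₁ y₂ y₃ y₄ = 0 := by
    apply Int.cast_injective (α := ℚ)
    rw [Int.cast_zero, ← eq_intCast (Int.castRingHom ℚ), map_qForm]
    simp only [eq_intCast, hy₁, hy₂, hy₃, hy₄, qForm_mul]
    exact mul_eq_zero_of_right _ h
  obtain ⟨h₁, h₂, h₃, h₄⟩ := Int.eq_zero_of_qForm_eq_zero h8 hy
  simp only [h₁, h₂, h₃, h₄, Int.cast_zero, zero_eq_mul, hd, false_or] at hy₁ hy₂ hy₃ hy₄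
  exact ⟨hy₁, hy₂, hy₃, hy₄⟩

/-- Let `q_a(x₁,x₂,x₃,x₄) = 7x₁² + 7x₂² − x₃² + a·x₄²` for a positive integer `a`.
If `a ≡ −1 (mod 8)` then `q_a` does not represent `0` nontrivially over `ℚ`. -/
theorem stmt_11 (a : ℤ) (ha : 0 < a) (h8 : a % 8 = 7)
    (x₁ x₂ x₃ x₄ : ℚ)
    (h : 7 * x₁ ^ 2 + 7 * x₂ ^ 2 - x₃ ^ 2 + (a : ℚ) * x₄ ^ 2 = 0) :
    x₁ = 0 ∧ x₂ = 0 ∧ x₃ = 0 ∧ x₄ = 0 :=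
  stmt_11_general a h8 x₁ x₂ x₃ x₄ h
end
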